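/- There exist universal constants C > 0 and c₀ > 0 (independent of ε, δ, κ) such that the following holds: for any ε, δ, κ > 0 with κ²ε ≤ c₀, if (v, φ) minimizes G_{ε,δ,κ} over the admissible class with v ≥ 0, then ‖1 − v‖_{L^∞((0,1))} ≤ C κ √ε. -/
import Mathlib


open MeasureTheory Real Set Filter Topology

noncomputable section

/-- `f` is absolutely continuous on `[0,1]` with derivative `h ∈ L²((0,1))`. -/
def MemAC (f h : ℝ → ℝ) : Prop :=
  (∀ x ∈ Icc (0:ℝ) 1, f x = f 0 + ∫ t in (0:ℝ)..x, h t) ∧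
  IntervalIntegrable h volume 0 1 ∧
  IntervalIntegrable (fun t => (h t) ^ 2) volume 0 1

/-- The admissible class for the full energy: pairs `(v, φ)` of absolutely continuous
functions on `[0,1]` with square-integrable derivatives `(v', φ')`, with `v ≥ 0`,
`∫₀¹ v² = 1` and `φ 0 = 0`. -/
def MemI (v v' φ φ' : ℝ → ℝ) : Prop :=
  MemAC v v' ∧ MemAC φ φ' ∧ (∀ x ∈ Icc (0:ℝ) 1, 0 ≤ v x) ∧
  φ 0 = 0 ∧ (∫ x in (0:ℝ)..1, (v x) ^ 2) = 1

/-- The full Gross–Pitaevskii-type energy `G_{ε,δ,κ}(v, φ)`. -/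
def Genergy (ε δ κ : ℝ) (v v' φ φ' : ℝ → ℝ) : ℝ :=
  (1 / 2) * (∫ x in (0:ℝ)..1, (v' x) ^ 2) +
  (1 / (4 * ε ^ 2)) * (∫ x in (0:ℝ)..1, (1 - (v x) ^ 2) ^ 2) +
  (1 / 8) * (∫ x in (0:ℝ)..1, (v x) ^ 2 * (φ' x) ^ 2) +
  (δ / (8 * ε ^ 2)) * (∫ x in (0:ℝ)..1, (v x) ^ 4 * Real.sin (φ x) ^ 2) -
  (κ / 2) * (∫ x in (0:ℝ)..1, (v x) ^ 2 * φ' x)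

/-- `(v, v', φ, φ')` minimizes `G_{ε,δ,κ}` over the admissible class. -/
def IsMinG (ε δ κ : ℝ) (v v' φ φ' : ℝ → ℝ) : Prop :=
  MemI v v' φ φ' ∧ ∀ w w' ψ ψ' : ℝ → ℝ, MemI w w' ψ ψ' →
    Genergy ε δ κ v v' φ φ' ≤ Genergy ε δ κ w w' ψ ψ'

/-- Cauchy–Schwarz on an interval. -/
lemma cs_interval {h : ℝ → ℝ} {a b : ℝ} (hab : a ≤ b)
    (h1 : IntervalIntegrable h volume a b)
    (h2 : IntervalIntegrable (fun t => (h t) ^ 2) volume a b) :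
    (∫ t in a..b, h t) ^ 2 ≤ (b - a) * ∫ t in a..b, (h t) ^ 2 := by
  rcases eq_or_lt_of_le hab with rfl | hlt
  · simp
  have hL : 0 < b - a := sub_pos.mpr hlt
  set S := ∫ t in a..b, h t with hS
  set Q := ∫ t in a..b, (h t) ^ 2 with hQ
  set c : ℝ := S / (b - a) with hc
  have key : 0 ≤ ∫ t in a..b, (h t - c) ^ 2 :=
    intervalIntegral.integral_nonneg hab (fun u _ => sq_nonneg _)
  have expand : (∫ t in a..b, (h t - c) ^ 2) = Q - (2 * c) * S + (b - a) * c ^ 2 := by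
    have e1 : (∫ t in a..b, (h t - c) ^ 2)
        = ∫ t in a..b, ((h t) ^ 2 - (2 * c) * h t + c ^ 2) :=
      intervalIntegral.integral_congr fun t _ => by ring
    rw [e1, intervalIntegral.integral_add (h2.sub (h1.const_mul (2 * c)))
      intervalIntegrable_const,
      intervalIntegral.integral_sub h2 (h1.const_mul (2 * c)),
      intervalIntegral.integral_const_mul]
    simp only [intervalIntegral.integral_const, smul_eq_mul]
    try ring
  rw [expand] at key
  have hcL : c * (b - a) = S := by
    rw [hc]; field_simp
  have e2 : (b - a) * c ^ 2 = c * S := by rw [← hcL]; ring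
  have h1 : c * S ≤ Q := by nlinarith [key, e2]
  have e3 : S ^ 2 = (b - a) * (c * S) := by rw [← hcL]; ring
  rw [e3]
  exact mul_le_mul_of_nonneg_left h1 hL.le

lemma memAC_continuousOn {f h : ℝ → ℝ} (hf : MemAC f h) : ContinuousOn f (Icc 0 1) := by
  have h2 := intervalIntegral.continuousOn_primitive_interval' hf.2.1
    (by rw [uIcc_of_le (by norm_num : (0:ℝ) ≤ 1)]; exact ⟨le_refl 0, by norm_num⟩)
  rw [uIcc_of_le (by norm_num : (0:ℝ) ≤ 1)] at h2
  exact (continuousOn_const.add h2).congr hf.1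

set_option maxHeartbeats 1000000 in
/-- Hölder-type bound from the fundamental theorem of calculus plus Cauchy–Schwarz. -/
lemma holder_bound {v v' : ℝ → ℝ} (hv : MemAC v v') {a b : ℝ}
    (ha : a ∈ Icc (0:ℝ) 1) (hb : b ∈ Icc (0:ℝ) 1) (hab : a ≤ b) :
    (v b - v a) ^ 2 ≤ (b - a) * ∫ t in (0:ℝ)..1, (v' t) ^ 2 := by
  obtain ⟨hf, hi1, hi2⟩ := hv
  have sub1 : uIcc a b ⊆ uIcc (0:ℝ) 1 := by
    rw [uIcc_of_le hab, uIcc_of_le (by norm_num : (0:ℝ) ≤ 1)]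
    exact Icc_subset_Icc ha.1 hb.2
  have i1 : IntervalIntegrable v' volume a b := hi1.mono_set sub1
  have i2 : IntervalIntegrable (fun t => (v' t) ^ 2) volume a b := hi2.mono_set sub1
  have h0b : IntervalIntegrable v' volume 0 b := hi1.mono_set (by
    rw [uIcc_of_le hb.1, uIcc_of_le (by norm_num : (0:ℝ) ≤ 1)]
    exact Icc_subset_Icc le_rfl hb.2)
  have h0a : IntervalIntegrable v' volume 0 a := hi1.mono_set (by
    rw [uIcc_of_le ha.1, uIcc_of_le (by norm_num : (0:ℝ) ≤ 1)]
    exact Icc_subset_Icc le_rfl ha.2)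
  have hdiff : v b - v a = ∫ t in a..b, v' t := by
    rw [hf b hb, hf a ha]
    have := intervalIntegral.integral_interval_sub_left h0b h0a
    linarith [this]
  rw [hdiff]
  calc (∫ t in a..b, v' t) ^ 2 ≤ (b - a) * ∫ t in a..b, (v' t) ^ 2 :=
        cs_interval hab i1 i2
    _ ≤ (b - a) * ∫ t in (0:ℝ)..1, (v' t) ^ 2 := by
        refine mul_le_mul_of_nonneg_left ?_ (sub_nonneg.mpr hab)
        exact intervalIntegral.integral_mono_interval ha.1 hab hb.2
          (ae_of_all _ fun t => sq_nonneg (v' t)) hi2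

set_option maxHeartbeats 2000000 in
/-- There exist universal constants `C > 0` and `c₀ > 0` such that
for any `ε, δ, κ > 0` with `κ²ε ≤ c₀`, if `(v, φ)` minimizes `G_{ε,δ,κ}` over the
admissible class (with `v ≥ 0`), then `‖1 − v‖_{L^∞((0,1))} ≤ C κ √ε`. -/
theorem stmt18 :
    ∃ C > 0, ∃ c₀ > 0, ∀ ε δ κ : ℝ, 0 < ε → 0 < δ → 0 < κ → κ ^ 2 * ε ≤ c₀ →
      ∀ v v' φ φ' : ℝ → ℝ, IsMinG ε δ κ v v' φ φ' →
        ∀ x ∈ Icc (0:ℝ) 1, |1 - v x| ≤ C * κ * Real.sqrt ε := by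
  refine ⟨3, by norm_num, 1, by norm_num, ?_⟩
  intro ε δ κ hε hδ hκ _ v v' φ φ' hmin x hx
  obtain ⟨⟨hvAC, hφAC, hvnn, hφ0, hmass⟩, hopt⟩ := hmin
  have huIcc : uIcc (0:ℝ) 1 = Icc 0 1 := uIcc_of_le (by norm_num)
  have hvc : ContinuousOn v (Icc 0 1) := memAC_continuousOn hvAC
  -- integrability facts
  have i_v2 : IntervalIntegrable (fun y => (v y) ^ 2) volume 0 1 :=
    ContinuousOn.intervalIntegrable (by rw [huIcc]; exact hvc.pow 2)
  have i_1v2 : IntervalIntegrable (fun y => (1 - (v y) ^ 2) ^ 2) volume 0 1 :=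
    ContinuousOn.intervalIntegrable (by
      rw [huIcc]; exact ((continuousOn_const.sub (hvc.pow 2)).pow 2))
  have i_v2p2 : IntervalIntegrable (fun y => (v y) ^ 2 * (φ' y) ^ 2) volume 0 1 :=
    hφAC.2.2.continuousOn_mul (by rw [huIcc]; exact hvc.pow 2)
  have i_v2p : IntervalIntegrable (fun y => (v y) ^ 2 * φ' y) volume 0 1 :=
    hφAC.2.1.continuousOn_mul (by rw [huIcc]; exact hvc.pow 2)
  -- the minimizer has nonpositive energy
  have htriv : MemI (fun _ => 1) (fun _ => 0) (fun _ => 0) (fun _ => 0) := by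
    refine ⟨⟨fun y _ => by simp, intervalIntegrable_const,
        by simpa using (intervalIntegrable_const : IntervalIntegrable (fun _ => (0:ℝ)) volume 0 1)⟩,
      ⟨fun y _ => by simp, intervalIntegrable_const,
        by simpa using (intervalIntegrable_const : IntervalIntegrable (fun _ => (0:ℝ)) volume 0 1)⟩,
      fun y _ => by norm_num, rfl, by simp⟩
  have hG0 : Genergy ε δ κ (fun _ => 1) (fun _ => 0) (fun _ => 0) (fun _ => 0) = 0 := by
    simp [Genergy]
  have hG : Genergy ε δ κ v v' φ φ' ≤ 0 := hG0 ▸ hopt _ _ _ _ htriv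
  set S1 := ∫ y in (0:ℝ)..1, (v' y) ^ 2 with hS1def
  set S2 := ∫ y in (0:ℝ)..1, (1 - (v y) ^ 2) ^ 2 with hS2def
  set S3 := ∫ y in (0:ℝ)..1, (v y) ^ 2 * (φ' y) ^ 2 with hS3def
  set S4 := ∫ y in (0:ℝ)..1, (v y) ^ 4 * Real.sin (φ y) ^ 2 with hS4def
  set S5 := ∫ y in (0:ℝ)..1, (v y) ^ 2 * φ' y with hS5def
  have hS1nn : 0 ≤ S1 := intervalIntegral.integral_nonneg (by norm_num)
    (fun u _ => sq_nonneg _)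
  have hS2nn : 0 ≤ S2 := intervalIntegral.integral_nonneg (by norm_num)
    (fun u _ => sq_nonneg _)
  have hS4nn : 0 ≤ S4 := intervalIntegral.integral_nonneg (by norm_num)
    (fun u _ => by positivity)
  have hGexp : (1/2) * S1 + (1/(4*ε^2)) * S2 + (1/8) * S3 + (δ/(8*ε^2)) * S4
      - (κ/2) * S5 ≤ 0 := hG
  -- the cross terms are bounded below
  have hcross : 0 ≤ (1/8) * S3 - (κ/2) * S5 + κ^2/2 := by
    have hnn : 0 ≤ ∫ y in (0:ℝ)..1,
        ((1/8) * ((v y) ^ 2 * (φ' y) ^ 2) - (κ/2) * ((v y) ^ 2 * φ' y)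
          + (κ^2/2) * (v y) ^ 2) :=
      intervalIntegral.integral_nonneg (by norm_num)
        (fun u _ => by nlinarith [sq_nonneg (v u * (φ' u - 2 * κ))])
    have heq : (∫ y in (0:ℝ)..1,
        ((1/8) * ((v y) ^ 2 * (φ' y) ^ 2) - (κ/2) * ((v y) ^ 2 * φ' y)
          + (κ^2/2) * (v y) ^ 2))
        = (1/8) * S3 - (κ/2) * S5 + (κ^2/2) * (∫ y in (0:ℝ)..1, (v y) ^ 2) := by
      rw [intervalIntegral.integral_add ((i_v2p2.const_mul (1/8)).sub
          (i_v2p.const_mul (κ/2))) (i_v2.const_mul (κ^2/2)),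
        intervalIntegral.integral_sub (i_v2p2.const_mul (1/8)) (i_v2p.const_mul (κ/2)),
        intervalIntegral.integral_const_mul, intervalIntegral.integral_const_mul,
        intervalIntegral.integral_const_mul]
    rw [heq, hmass] at hnn
    linarith
  have hdS4 : 0 ≤ (δ/(8*ε^2)) * S4 := mul_nonneg (by positivity) hS4nn
  have key2 : (1/2) * S1 + (1/(4*ε^2)) * S2 ≤ κ^2/2 := by linarith
  have hS1le : S1 ≤ κ^2 := by
    have h1 : 0 ≤ (1/(4*ε^2)) * S2 := mul_nonneg (by positivity) hS2nn
    linarith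
  have hS2le : S2 ≤ 2 * ε^2 * κ^2 := by
    have h1 : 0 ≤ (1/2) * S1 := by linarith
    have h5 : (1/(4*ε^2)) * S2 ≤ κ^2/2 := by linarith
    have h4 : (0:ℝ) < 4 * ε^2 := by positivity
    calc S2 = (4*ε^2) * ((1/(4*ε^2)) * S2) := by field_simp
      _ ≤ (4*ε^2) * (κ^2/2) := mul_le_mul_of_nonneg_left h5 h4.le
      _ = 2 * ε^2 * κ^2 := by ring
  -- Hölder continuity of v
  have hHolder : ∀ a ∈ Icc (0:ℝ) 1, ∀ b ∈ Icc (0:ℝ) 1,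
      (v b - v a) ^ 2 ≤ κ^2 * |b - a| := by
    have base : ∀ a ∈ Icc (0:ℝ) 1, ∀ b ∈ Icc (0:ℝ) 1, a ≤ b →
        (v b - v a) ^ 2 ≤ κ^2 * |b - a| := by
      intro a ha b hb hab
      have h1 := holder_bound hvAC ha hb hab
      rw [abs_of_nonneg (sub_nonneg.mpr hab)]
      calc (v b - v a) ^ 2 ≤ (b - a) * S1 := h1
        _ ≤ (b - a) * κ^2 := mul_le_mul_of_nonneg_left hS1le (sub_nonneg.mpr hab)
        _ = κ^2 * (b - a) := mul_comm _ _
    intro a ha b hb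
    rcases le_total a b with h | h
    · exact base a ha b hb h
    · calc (v b - v a) ^ 2 = (v a - v b) ^ 2 := by ring
        _ ≤ κ^2 * |a - b| := base b hb a ha h
        _ = κ^2 * |b - a| := by rw [abs_sub_comm]
  -- main argument
  by_contra hcon
  push_neg at hcon
  set M := |1 - v x| with hMdef
  have hMpos : 0 < M := lt_of_le_of_lt (by positivity) hcon
  have hvx : 0 ≤ v x := hvnn x hx
  -- Step 1 : M < 2κ, else the mass constraint is violated
  have hM2κ : M < 2 * κ := by
    by_contra hge
    push_neg at hge
    have hbd : ∀ y ∈ Icc (0:ℝ) 1, (v y - v x) ^ 2 ≤ (M/2) ^ 2 := by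
      intro y hy
      have h1 := hHolder x hx y hy
      have h2 : |y - x| ≤ 1 := by
        rw [abs_le]; constructor
        · linarith [hy.1, hx.2]
        · linarith [hy.2, hx.1]
      have h4 : κ^2 * |y - x| ≤ κ^2 * 1 := mul_le_mul_of_nonneg_left h2 (sq_nonneg κ)
      have h5 : κ^2 ≤ (M/2)^2 := pow_le_pow_left₀ hκ.le (by linarith) 2
      linarith
    rcases le_total (v x) 1 with hv1 | hv1
    · have hMeq : M = 1 - v x := abs_of_nonneg (by linarith)
      have hM1 : M ≤ 1 := by linarith
      have hup : ∀ y ∈ Icc (0:ℝ) 1, (v y) ^ 2 ≤ (1 - M/2) ^ 2 := by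
        intro y hy
        have h1 := hbd y hy
        have h2 := hvnn y hy
        have hb2 := abs_le_of_sq_le_sq' h1 (by positivity : (0:ℝ) ≤ M/2)
        have h3 : v y ≤ 1 - M/2 := by linarith [hb2.2]
        exact pow_le_pow_left₀ h2 h3 2
      have hle : (∫ y in (0:ℝ)..1, (v y) ^ 2)
          ≤ ∫ _y in (0:ℝ)..1, ((1 - M/2) ^ 2 : ℝ) :=
        intervalIntegral.integral_mono_on (by norm_num) i_v2 intervalIntegrable_const hup
      rw [hmass, intervalIntegral.integral_const] at hle
      simp only [smul_eq_mul, sub_zero, one_mul] at hle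
      have hq : M^2 ≤ M := by
        have h6 := mul_le_mul_of_nonneg_left hM1 hMpos.le
        calc M^2 = M * M := sq M
          _ ≤ M * 1 := h6
          _ = M := mul_one M
      have hexp : (1 - M/2)^2 = 1 - M + M^2/4 := by ring
      linarith
    · have hMeq : M = v x - 1 := by
        rw [hMdef, abs_of_nonpos (by linarith)]; ring
      have hlow : ∀ y ∈ Icc (0:ℝ) 1, (1 + M/2) ^ 2 ≤ (v y) ^ 2 := by
        intro y hy
        have h1 := hbd y hy
        have hb2 := abs_le_of_sq_le_sq' h1 (by positivity : (0:ℝ) ≤ M/2)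
        have h3 : 1 + M/2 ≤ v y := by linarith [hb2.1]
        exact pow_le_pow_left₀ (by linarith) h3 2
      have hle : (∫ _y in (0:ℝ)..1, ((1 + M/2) ^ 2 : ℝ))
          ≤ ∫ y in (0:ℝ)..1, (v y) ^ 2 :=
        intervalIntegral.integral_mono_on (by norm_num) intervalIntegrable_const i_v2 hlow
      rw [hmass, intervalIntegral.integral_const] at hle
      simp only [smul_eq_mul, sub_zero, one_mul] at hle
      have hexp : (1 + M/2)^2 = 1 + M + M^2/4 := by ring
      linarith [sq_nonneg M]
  -- Step 2 : localize on an interval of length r around x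
  set r : ℝ := (M / (2*κ)) ^ 2 with hrdef
  have hr0 : 0 < r := by positivity
  have hr1 : r < 1 := by
    have ht : 0 ≤ M / (2*κ) := by positivity
    have h1 : M / (2*κ) < 1 := (div_lt_one (by positivity)).mpr hM2κ
    nlinarith
  set a : ℝ := max 0 (x - r) with hadef
  set b : ℝ := min 1 (x + r) with hbdef
  have ha0 : (0:ℝ) ≤ a := le_max_left _ _
  have hb1 : b ≤ 1 := min_le_left _ _
  have hax : a ≤ x := max_le hx.1 (by linarith)
  have hxb : x ≤ b := le_min hx.2 (by linarith)
  have hab : a ≤ b := hax.trans hxb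
  have har : x - r ≤ a := le_max_right _ _
  have hbr : b ≤ x + r := min_le_right _ _
  have hba : r ≤ b - a := by
    rcases le_total (x - r) 0 with h | h
    · have ha' : a = 0 := max_eq_left h
      rcases le_total (x + r) 1 with h2 | h2
      · have hb' : b = x + r := min_eq_right h2
        rw [ha', hb']; linarith [hx.1]
      · have hb' : b = 1 := min_eq_left h2
        rw [ha', hb']; linarith
    · have ha' : a = x - r := max_eq_right h
      rcases le_total (x + r) 1 with h2 | h2
      · have hb' : b = x + r := min_eq_right h2
        rw [ha', hb']; linarith
      · have hb' : b = 1 := min_eq_left h2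
        rw [ha', hb']; linarith [hx.2]
  have hpt : ∀ y ∈ Icc a b, (M/2) ^ 2 ≤ (1 - (v y) ^ 2) ^ 2 := by
    intro y hy
    have hy01 : y ∈ Icc (0:ℝ) 1 := ⟨ha0.trans hy.1, hy.2.trans hb1⟩
    have h1 := hHolder x hx y hy01
    have habs : |y - x| ≤ r := abs_le.mpr ⟨by linarith [hy.1], by linarith [hy.2]⟩
    have hrr : κ^2 * r = (M/2) ^ 2 := by
      rw [hrdef]; field_simp
    have h2 : (v y - v x) ^ 2 ≤ (M/2) ^ 2 := by
      calc (v y - v x) ^ 2 ≤ κ^2 * |y - x| := h1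
        _ ≤ κ^2 * r := mul_le_mul_of_nonneg_left habs (sq_nonneg κ)
        _ = (M/2) ^ 2 := hrr
    have hynn := hvnn y hy01
    rcases le_total (v x) 1 with hv1 | hv1
    · have hMeq : M = 1 - v x := abs_of_nonneg (by linarith)
      have hM1 : M ≤ 1 := by linarith
      have hb2 := abs_le_of_sq_le_sq' h2 (by positivity : (0:ℝ) ≤ M/2)
      have h3 : v y ≤ 1 - M/2 := by linarith [hb2.2]
      have h4 : (v y) ^ 2 ≤ (1 - M/2) ^ 2 := pow_le_pow_left₀ hynn h3 2
      have hq : M^2 ≤ M := by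
        have h6 := mul_le_mul_of_nonneg_left hM1 hMpos.le
        calc M^2 = M * M := sq M
          _ ≤ M * 1 := h6
          _ = M := mul_one M
      have hexp : (1 - M/2)^2 = 1 - M + M^2/4 := by ring
      have h5 : M/2 ≤ 1 - (v y) ^ 2 := by linarith
      exact pow_le_pow_left₀ (by positivity) h5 2
    · have hMeq : M = v x - 1 := by
        rw [hMdef, abs_of_nonpos (by linarith)]; ring
      have hb2 := abs_le_of_sq_le_sq' h2 (by positivity : (0:ℝ) ≤ M/2)
      have h3 : 1 + M/2 ≤ v y := by linarith [hb2.1]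
      have h4 : (1 + M/2) ^ 2 ≤ (v y) ^ 2 := pow_le_pow_left₀ (by linarith) h3 2
      have hexp : (1 + M/2)^2 = 1 + M + M^2/4 := by ring
      have h5 : M/2 ≤ (v y) ^ 2 - 1 := by linarith [sq_nonneg M]
      calc (M/2) ^ 2 ≤ ((v y) ^ 2 - 1) ^ 2 := pow_le_pow_left₀ (by positivity) h5 2
        _ = (1 - (v y) ^ 2) ^ 2 := by ring
  have hsubab : uIcc a b ⊆ uIcc (0:ℝ) 1 := by
    rw [uIcc_of_le hab, huIcc]; exact Icc_subset_Icc ha0 hb1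
  have hint : r * (M/2) ^ 2 ≤ S2 := by
    have e1 : (b - a) * ((M/2) ^ 2) ≤ ∫ y in a..b, (1 - (v y) ^ 2) ^ 2 := by
      have := intervalIntegral.integral_mono_on hab intervalIntegrable_const
        (i_1v2.mono_set hsubab) hpt
      rw [intervalIntegral.integral_const] at this
      simpa [smul_eq_mul] using this
    have e2 : (∫ y in a..b, (1 - (v y) ^ 2) ^ 2) ≤ S2 :=
      intervalIntegral.integral_mono_interval ha0 hab hb1
        (ae_of_all _ fun t => sq_nonneg _) i_1v2
    linarith [e1, e2, mul_le_mul_of_nonneg_right hba (sq_nonneg (M/2))]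
  have hre : r * (M/2) ^ 2 = M^4 / (16 * κ^2) := by
    rw [hrdef]; field_simp; ring
  have hM4 : M^4 ≤ 32 * ε^2 * κ^4 := by
    have h2 : M^4 / (16 * κ^2) ≤ 2 * ε^2 * κ^2 := by
      rw [← hre]; exact hint.trans hS2le
    calc M^4 = (16 * κ^2) * (M^4 / (16 * κ^2)) := by field_simp
      _ ≤ (16 * κ^2) * (2 * ε^2 * κ^2) := mul_le_mul_of_nonneg_left h2 (by positivity)
      _ = 32 * ε^2 * κ^4 := by ring
  have hMlt : 81 * κ^4 * ε^2 < M^4 := by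
    have h1 : (3 * κ * Real.sqrt ε) ^ 4 = 81 * κ^4 * ε^2 := by
      have hsq : Real.sqrt ε ^ 2 = ε := Real.sq_sqrt hε.le
      calc (3 * κ * Real.sqrt ε) ^ 4
          = 81 * κ^4 * (Real.sqrt ε ^ 2) ^ 2 := by ring
        _ = 81 * κ^4 * ε^2 := by rw [hsq]
    calc 81 * κ^4 * ε^2 = (3 * κ * Real.sqrt ε) ^ 4 := h1.symm
      _ < M ^ 4 := pow_lt_pow_left₀ hcon (by positivity) (by norm_num)
  have hpos : 0 < κ^4 * ε^2 := by positivity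
  linarith [hM4, hMlt, hpos]
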